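/- arXiv:1911.04076 — 4 statements merged into one kernel-verified Lean document; each statement's English description precedes it below -/
import Mathlib

section
/- Let φ: R^n → R^m be continuously differentiable, C ⊆ R^m closed, φ(x̄) ∈ C, and let d satisfy ∇φ(x̄)d ∈ T_C(φ(x̄)). If the mapping M(x) := φ(x) − C is metrically subregular at (x̄, 0) in direction d with modulus κ̄, then the linearized mapping w ↦ ∇φ(x̄)w − T_C(φ(x̄)) is metrically subregular at (d, 0) with modulus at most κ̄. -/
open Filter Topology Pointwise RealInnerProductSpace

section Defs
variable {E F : Type*}
variable [NormedAddCommGroup E] [InnerProductSpace ℝ E]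
variable [NormedAddCommGroup F] [InnerProductSpace ℝ F]

/-- Bouligand (contingent) tangent cone, via sequences. -/
def tangentCone' (S : Set E) (x : E) : Set E :=
  {d | ∃ t : ℕ → ℝ, ∃ v : ℕ → E, (∀ k, 0 < t k) ∧ Tendsto t atTop (𝓝 0) ∧
    Tendsto v atTop (𝓝 d) ∧ ∀ k, x + t k • v k ∈ S}

/-- Outer second-order tangent set. -/
def tangentCone2 (S : Set E) (x d : E) : Set E :=
  {w | ∃ t : ℕ → ℝ, ∃ v : ℕ → E, (∀ k, 0 < t k) ∧ Tendsto t atTop (𝓝 0) ∧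
    Tendsto v atTop (𝓝 w) ∧ ∀ k, x + t k • d + ((t k)^2 / 2) • v k ∈ S}

/-- Regular (Fréchet) normal cone. -/
def frechetNormal (S : Set E) (x : E) : Set E :=
  {v | ∀ ε > (0:ℝ), ∃ δ > (0:ℝ), ∀ y ∈ S, ‖y - x‖ ≤ δ → ⟪v, y - x⟫ ≤ ε * ‖y - x‖}

/-- Limiting (Mordukhovich) normal cone. -/
def limNormal (S : Set E) (x : E) : Set E :=
  {v | ∃ xk vk : ℕ → E, (∀ k, xk k ∈ S) ∧ Tendsto xk atTop (𝓝 x) ∧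
    Tendsto vk atTop (𝓝 v) ∧ ∀ k, vk k ∈ frechetNormal S (xk k)}

/-- Directional limiting normal cone. -/
def dirLimNormal (S : Set E) (x d : E) : Set E :=
  {v | ∃ t : ℕ → ℝ, ∃ dk vk : ℕ → E, (∀ k, 0 < t k) ∧ Tendsto t atTop (𝓝 0) ∧
    Tendsto dk atTop (𝓝 d) ∧ Tendsto vk atTop (𝓝 v) ∧
    ∀ k, vk k ∈ frechetNormal S (x + t k • dk k)}

/-- Directional regular (Clarke) tangent cone. -/
def dirRegTangent (S : Set E) (x d : E) : Set E :=
  {v | ∀ t : ℕ → ℝ, ∀ dk : ℕ → E, (∀ k, 0 < t k) → Tendsto t atTop (𝓝 0) →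
    Tendsto dk atTop (𝓝 d) → (∀ k, x + t k • dk k ∈ S) →
    ∃ vk : ℕ → E, Tendsto vk atTop (𝓝 v) ∧ ∀ k, vk k ∈ tangentCone' S (x + t k • dk k)}

/-- Regular (Clarke) tangent cone, via sequences. -/
def clarkeTangent (S : Set E) (x : E) : Set E :=
  {v | ∀ t : ℕ → ℝ, ∀ xk : ℕ → E, (∀ k, 0 < t k) → Tendsto t atTop (𝓝 0) →
    (∀ k, xk k ∈ S) → Tendsto xk atTop (𝓝 x) →
    ∃ vk : ℕ → E, Tendsto vk atTop (𝓝 v) ∧ ∀ k, xk k + t k • vk k ∈ S}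

/-- Polar cone. -/
def polarCone (K : Set E) : Set E := {v | ∀ w ∈ K, ⟪v, w⟫ ≤ 0}

/-- Directional neighborhood V_{ρ,δ}(d). -/
def dirNbhd (ρ δ : ℝ) (d : E) : Set E :=
  {w | ‖w‖ < ρ ∧ ‖‖d‖ • w - ‖w‖ • d‖ ≤ δ * (‖w‖ * ‖d‖)}

/-- Metric subregularity of x ↦ g(x) - Λ at (x,0) in direction d. -/
def dirMetrSubreg (g : E → F) (Λ : Set F) (x d : E) : Prop :=
  ∃ κ > (0:ℝ), ∃ ρ > (0:ℝ), ∃ δ > (0:ℝ), ∀ y : E, y - x ∈ dirNbhd ρ δ d →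
    Metric.infDist y {z | g z ∈ Λ} ≤ κ * Metric.infDist (g y) Λ

/-- Metric subregularity in direction d with modulus κ. -/
def dirMetrSubregMod (g : E → F) (Λ : Set F) (x d : E) (κ : ℝ) : Prop :=
  ∀ κ' > κ, ∃ ρ > (0:ℝ), ∃ δ > (0:ℝ), ∀ y : E, y - x ∈ dirNbhd ρ δ d →
    Metric.infDist y {z | g z ∈ Λ} ≤ κ' * Metric.infDist (g y) Λ

/-- Support function, with values in EReal. -/
noncomputable def suppFn (S : Set E) (l : E) : EReal :=
  sSup ((fun u => ((⟪l, u⟫ : ℝ) : EReal)) '' S)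

/-- Lower generalized support function. -/
noncomputable def sigmaHat (S : Set E) (l : E) : EReal :=
  liminf (fun l' => sInf ((fun u => ((⟪l', u⟫ : ℝ) : EReal)) '' {u | l' ∈ limNormal S u})) (𝓝 l)

end Defs

/-! Fix `κ'` strictly between `κb` and `κ`. For `w` near `d` the ray `xb + s • w`, `s ↓ 0`, stays
in the directional neighbourhood, so for every `u ∈ T_C(φ xb)` subregularity gives
`dist(xb + s • w, φ⁻¹ C) ≤ κ' dist(φ (xb + s • w), C) ≤ κ' s ‖∇φ(xb) w - u‖ + o(s)`.
Rescaling near-nearest points of `φ⁻¹ C` by `s` and extracting a convergent subsequence (here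
finite dimension is used) yields `z` in the tangent cone of `φ⁻¹ C` with
`‖w - z‖ ≤ κ' ‖∇φ(xb) w - u‖`, and `∇φ(xb) z ∈ T_C(φ xb)`. When `κ < 0`, the same argument run
with modulus `0` gives `z = w`, so `∇φ(xb) w ∈ T_C(φ xb)` and both sides vanish. -/

open Metric Set

section

variable {E F : Type*} [NormedAddCommGroup E] [InnerProductSpace ℝ E]
  [NormedAddCommGroup F] [InnerProductSpace ℝ F]

theorem zero_mem_tangentCone' {S : Set E} {x : E} (hx : x ∈ S) : (0 : E) ∈ tangentCone' S x :=
  ⟨fun k => 1 / ((k : ℝ) + 1), fun _ => 0, fun k => by positivity,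
    tendsto_one_div_add_atTop_nhds_zero_nat, tendsto_const_nhds, fun k => by simpa using hx⟩

theorem HasFDerivAt.tendsto_slope_seq {φ : E → F} {A : E →L[ℝ] F} {x : E} (hφ : HasFDerivAt φ A x)
    {t : ℕ → ℝ} {z : ℕ → E} {z₀ : E} (ht : ∀ k, t k ≠ 0) (ht0 : Tendsto t atTop (𝓝 0))
    (hz : Tendsto z atTop (𝓝 z₀)) :
    Tendsto (fun k => (t k)⁻¹ • (φ (x + t k • z k) - φ x)) atTop (𝓝 (A z₀)) := by
  refine hφ.hasFDerivWithinAt.lim (s := univ) (by simpa using ht0.smul hz)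
    (Eventually.of_forall fun _ => mem_univ _) ?_
  simpa only [inv_smul_smul₀ (ht _)] using hz

theorem HasFDerivAt.mapsTo_tangentCone'_preimage {φ : E → F} {A : E →L[ℝ] F} {x : E}
    (hφ : HasFDerivAt φ A x) (C : Set F) :
    MapsTo A (tangentCone' (φ ⁻¹' C) x) (tangentCone' C (φ x)) := by
  rintro z ⟨t, v, ht, ht0, hv, hmem⟩
  refine ⟨t, fun k => (t k)⁻¹ • (φ (x + t k • v k) - φ x), ht, ht0,
    hφ.tendsto_slope_seq (fun k => (ht k).ne') ht0 hv, fun k => ?_⟩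
  simpa [smul_inv_smul₀ (ht k).ne'] using hmem k

theorem exists_mem_tangentCone'_dist_le [ProperSpace E] {S : Set E} (hS : S.Nonempty) {x w : E}
    {t r : ℕ → ℝ} {r₀ : ℝ} (ht : ∀ k, 0 < t k) (ht0 : Tendsto t atTop (𝓝 0))
    (hr : Tendsto r atTop (𝓝 r₀)) (h : ∀ᶠ k in atTop, infDist (x + t k • w) S ≤ t k * r k) :
    ∃ z ∈ tangentCone' S x, dist w z ≤ r₀ := by
  have hp : ∀ k : ℕ, ∃ p ∈ S, dist (x + t k • w) p < infDist (x + t k • w) S + t k / (k + 1) :=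
    fun k => (infDist_lt_iff hS).1 (lt_add_of_pos_right _ (div_pos (ht k) k.cast_add_one_pos))
  choose p hpS hp using hp
  set z : ℕ → E := fun k => (t k)⁻¹ • (p k - x)
  have hxz : ∀ k, x + t k • z k = p k := fun k => by simp [z, smul_inv_smul₀ (ht k).ne']
  set s : ℕ → ℝ := fun k => r k + 1 / (k + 1)
  have hs : Tendsto s atTop (𝓝 r₀) := by
    simpa only [add_zero] using hr.add tendsto_one_div_add_atTop_nhds_zero_nat
  have hzs : ∀ᶠ k in atTop, dist w (z k) ≤ s k := by
    filter_upwards [h] with k hk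
    have hdist : t k * dist w (z k) = dist (x + t k • w) (p k) := by
      rw [← hxz k, dist_add_left, dist_smul₀, Real.norm_of_nonneg (ht k).le]
    have : t k * dist w (z k) ≤ t k * s k := by
      rw [hdist, mul_add, mul_one_div]; linarith [hp k]
    exact le_of_mul_le_mul_left this (ht k)
  have hbdd : ∃ᶠ k in atTop, z k ∈ closedBall w (r₀ + 1) := by
    refine (hzs.and (hs.eventually (gt_mem_nhds (lt_add_one r₀)))).frequently.mono ?_
    exact fun k hk => mem_closedBall'.2 (hk.1.trans hk.2.le)
  obtain ⟨z₀, -, σ, hσ, hzσ⟩ := tendsto_subseq_of_frequently_bounded isBounded_closedBall hbdd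
  refine ⟨z₀, ⟨t ∘ σ, z ∘ σ, fun k => ht _, ht0.comp hσ.tendsto_atTop, hzσ,
    fun k => by simp [hxz, hpS]⟩, ?_⟩
  exact le_of_tendsto_of_tendsto (tendsto_const_nhds.dist hzσ) (hs.comp hσ.tendsto_atTop)
    (hσ.tendsto_atTop.eventually hzs)

theorem exists_mem_tangentCone'_preimage_dist_le [ProperSpace E] {φ : E → F} {A : E →L[ℝ] F}
    {x w : E} {C : Set F} {c : ℝ} {u : F} (hφ : HasFDerivAt φ A x) (hx : φ x ∈ C) (hc : 0 ≤ c)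
    (hsub : ∀ᶠ s in 𝓝[>] (0 : ℝ),
      infDist (x + s • w) (φ ⁻¹' C) ≤ c * infDist (φ (x + s • w)) C)
    (hu : u ∈ tangentCone' C (φ x)) :
    ∃ z ∈ tangentCone' (φ ⁻¹' C) x, dist w z ≤ c * dist (A w) u := by
  obtain ⟨t, v, ht, ht0, hv, hmem⟩ := hu
  set q : ℕ → F := fun k => (t k)⁻¹ • (φ (x + t k • w) - φ x)
  have hq : Tendsto q atTop (𝓝 (A w)) :=
    hφ.tendsto_slope_seq (fun k => (ht k).ne') ht0 tendsto_const_nhds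
  have hφq : ∀ k, φ (x + t k • w) = φ x + t k • q k := fun k => by
    simp [q, smul_inv_smul₀ (ht k).ne']
  refine exists_mem_tangentCone'_dist_le ⟨x, hx⟩ ht ht0 ((hq.dist hv).const_mul c) ?_
  have ht0' : Tendsto t atTop (𝓝[>] 0) := tendsto_nhdsWithin_iff.2 ⟨ht0, .of_forall ht⟩
  filter_upwards [ht0'.eventually hsub] with k hk
  calc infDist (x + t k • w) (φ ⁻¹' C) ≤ c * infDist (φ (x + t k • w)) C := hk
    _ ≤ c * dist (φ (x + t k • w)) (φ x + t k • v k) := by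
      gcongr; exact infDist_le_dist_of_mem (hmem k)
    _ = t k * (c * dist (q k) (v k)) := by
      rw [hφq, dist_add_left, dist_smul₀, Real.norm_of_nonneg (ht k).le]; ring

theorem eventually_norm_smul_sub_le_mul (d : E) {δ : ℝ} (hδ : 0 < δ) :
    ∀ᶠ w in 𝓝 d, ‖‖d‖ • w - ‖w‖ • d‖ ≤ δ * (‖w‖ * ‖d‖) := by
  rcases eq_or_ne d 0 with rfl | hd
  · simp
  refine (ContinuousAt.eventually_lt (by fun_prop) (by fun_prop) ?_).mono fun _ => le_of_lt
  simpa using mul_pos hδ (mul_pos (norm_pos_iff.2 hd) (norm_pos_iff.2 hd))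

theorem eventually_smul_mem_dirNbhd {ρ δ : ℝ} {d w : E} (hρ : 0 < ρ)
    (hw : ‖‖d‖ • w - ‖w‖ • d‖ ≤ δ * (‖w‖ * ‖d‖)) :
    ∀ᶠ s in 𝓝[>] (0 : ℝ), s • w ∈ dirNbhd ρ δ d := by
  have hsmall : ∀ᶠ s in 𝓝 (0 : ℝ), s * ‖w‖ < ρ :=
    (continuous_mul_const ‖w‖).continuousAt.eventually_lt continuousAt_const (by simpa using hρ)
  filter_upwards [nhdsWithin_le_nhds hsmall, self_mem_nhdsWithin] with s hs (hs0 : 0 < s)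
  have hcone : ‖d‖ • (s • w) - ‖s • w‖ • d = s • (‖d‖ • w - ‖w‖ • d) := by
    rw [norm_smul, Real.norm_of_nonneg hs0.le, smul_sub, smul_comm, mul_smul]
  refine ⟨by rwa [norm_smul, Real.norm_of_nonneg hs0.le], ?_⟩
  rw [hcone, norm_smul, norm_smul, Real.norm_of_nonneg hs0.le]
  nlinarith

end

theorem Metric.infDist_le_mul_infDist_of_forall_exists {X Y : Type*} [PseudoMetricSpace X]
    [PseudoMetricSpace Y] {x : X} {y : Y} {K : Set X} {T : Set Y} {c : ℝ} (hT : T.Nonempty)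
    (hc : 0 ≤ c) (h : ∀ u ∈ T, ∃ z ∈ K, dist x z ≤ c * dist y u) :
    infDist x K ≤ c * infDist y T := by
  have : Nonempty T := hT.to_subtype
  rw [infDist_eq_iInf (s := T), Real.mul_iInf_of_nonneg hc]
  refine le_ciInf fun u => ?_
  obtain ⟨z, hz, hxz⟩ := h u u.2
  exact (infDist_le_dist_of_mem hz).trans hxz

theorem stmt_5_general {n m : ℕ} (φ : EuclideanSpace ℝ (Fin n) → EuclideanSpace ℝ (Fin m))
    (hφ : ContDiff ℝ 1 φ) (C : Set (EuclideanSpace ℝ (Fin m)))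
    (xb : EuclideanSpace ℝ (Fin n)) (hx : φ xb ∈ C)
    (d : EuclideanSpace ℝ (Fin n))
    (κb : ℝ) (hM : dirMetrSubregMod φ C xb d κb) :
    ∀ κ > κb, ∃ ρ > (0:ℝ), ∀ w : EuclideanSpace ℝ (Fin n), ‖w - d‖ < ρ →
      Metric.infDist w {w' | fderiv ℝ φ xb w' ∈ tangentCone' C (φ xb)} ≤
        κ * Metric.infDist (fderiv ℝ φ xb w) (tangentCone' C (φ xb)) := by
  intro κ hκ
  set A := fderiv ℝ φ xb
  set T := tangentCone' C (φ xb)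
  have hA : HasFDerivAt φ A xb := (hφ.differentiable one_ne_zero xb).hasFDerivAt
  obtain ⟨κ', hκb', hκ'⟩ := exists_between hκ
  obtain ⟨ρM, hρM, δM, hδM, hP⟩ := hM κ' hκb'
  obtain ⟨ρ, hρ, hcone⟩ := Metric.eventually_nhds_iff.1 (eventually_norm_smul_sub_le_mul d hδM)
  refine ⟨ρ, hρ, fun w hw => ?_⟩
  show infDist w (A ⁻¹' T) ≤ κ * infDist (A w) T
  have hsub : ∀ᶠ s in 𝓝[>] (0 : ℝ),
      infDist (xb + s • w) (φ ⁻¹' C) ≤ max κ' 0 * infDist (φ (xb + s • w)) C := by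
    filter_upwards [eventually_smul_mem_dirNbhd hρM (hcone (by rwa [dist_eq_norm]))] with s hs
    exact (hP _ (by simpa using hs)).trans
      (mul_le_mul_of_nonneg_right (le_max_left _ _) infDist_nonneg)
  have key : ∀ u ∈ T, ∃ z ∈ A ⁻¹' T, dist w z ≤ max κ' 0 * dist (A w) u := fun u hu => by
    obtain ⟨z, hz, hwz⟩ :=
      exists_mem_tangentCone'_preimage_dist_le hA hx (le_max_right _ _) hsub hu
    exact ⟨z, hA.mapsTo_tangentCone'_preimage C hz, hwz⟩
  rcases le_or_gt 0 κ with hκ0 | hκ0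
  · calc infDist w (A ⁻¹' T) ≤ max κ' 0 * infDist (A w) T :=
          infDist_le_mul_infDist_of_forall_exists ⟨0, zero_mem_tangentCone' hx⟩
            (le_max_right _ _) key
      _ ≤ κ * infDist (A w) T :=
          mul_le_mul_of_nonneg_right (max_le hκ'.le hκ0) infDist_nonneg
  · obtain ⟨z, hz, hwz⟩ := key 0 (zero_mem_tangentCone' hx)
    rw [max_eq_right (hκ'.trans hκ0).le, zero_mul, dist_le_zero] at hwz
    subst hwz
    rw [infDist_zero_of_mem hz, infDist_zero_of_mem (show A w ∈ T from hz), mul_zero]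

theorem stmt_5 {n m : ℕ} (φ : EuclideanSpace ℝ (Fin n) → EuclideanSpace ℝ (Fin m))
    (hφ : ContDiff ℝ 1 φ) (C : Set (EuclideanSpace ℝ (Fin m))) (hC : IsClosed C)
    (xb : EuclideanSpace ℝ (Fin n)) (hx : φ xb ∈ C)
    (d : EuclideanSpace ℝ (Fin n)) (hd : fderiv ℝ φ xb d ∈ tangentCone' C (φ xb))
    (κb : ℝ) (hM : dirMetrSubregMod φ C xb d κb) :
    ∀ κ > κb, ∃ ρ > (0:ℝ), ∀ w : EuclideanSpace ℝ (Fin n), ‖w - d‖ < ρ →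
      Metric.infDist w {w' | fderiv ℝ φ xb w' ∈ tangentCone' C (φ xb)} ≤
        κ * Metric.infDist (fderiv ℝ φ xb w) (tangentCone' C (φ xb)) :=
  stmt_5_general φ hφ C xb hx d κb hM
end

section
/- Under the hypotheses that g: R^n → R^m is twice continuously differentiable, Λ closed, g(x̄) ∈ Λ, and M(x) = g(x) − Λ is metrically subregular at (x̄, 0) in direction d with modulus κ, one has for all w ∈ R^n: dist(w, T_F²(x̄;d)) ≤ κ · dist(∇g(x̄)w + ∇²g(x̄)(d,d), T_Λ²(g(x̄); ∇g(x̄)d)), where F = {x : g(x) ∈ Λ}. -/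
open Filter Topology Pointwise RealInnerProductSpace

/-!
Fix `w` and `s ∈ T²_Λ(g x̄; ∇g(x̄) d)`, realised by `t_k ↓ 0` and `s_k → s`, and put
`z = ∇g(x̄) w + ∇²g(x̄)(d, d)`. Along the parabola `x_k = x̄ + t_k d + ½ t_k² w`, second-order
Taylor expansion gives `dist(g x_k, Λ) ≤ ½ t_k² (‖z - s‖ + o(1))`, and `x_k - x̄` eventually lies in
every directional neighbourhood `V_{ρ,δ}(d)`. Subregularity with a modulus `κ' > κ` then yields
points `y_k = x̄ + t_k d + ½ t_k² w_k ∈ F` with `‖w_k - w‖ ≤ κ' (‖z - s‖ + o(1))`; a cluster point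
`w'` of the bounded sequence `w_k` lies in `T²_F(x̄; d)` and `‖w - w'‖ ≤ κ' ‖z - s‖`. Let `κ' ↓ κ`.

When `κ = 0` the right-hand side may be `0 · ∞ = 0`, so this case is treated apart: a Lipschitz
estimate for `g` near `x̄` shows that `F` contains `x̄ + V_{ρ,δ}(d)`, hence `w ∈ T²_F(x̄; d)`.
-/

section Taylor

open Asymptotics

variable {E G : Type*} [NormedAddCommGroup E] [NormedSpace ℝ E]
  [NormedAddCommGroup G] [NormedSpace ℝ G]

theorem ContDiff.isLittleO_taylor_two {g : E → G} (hg : ContDiff ℝ 2 g) (x : E) :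
    (fun y ↦ g y - g x - fderiv ℝ g x (y - x) -
        (1 / 2 : ℝ) • fderiv ℝ (fderiv ℝ g) x (y - x) (y - x))
      =o[𝓝 x] fun y ↦ ‖y - x‖ ^ 2 := by
  set A := fderiv ℝ g x
  set B := fderiv ℝ (fderiv ℝ g) x
  have hsymm : IsSymmSndFDerivAt ℝ g x := hg.contDiffAt.isSymmSndFDerivAt (by simp)
  have hB : HasFDerivAt (fderiv ℝ g) B x :=
    ((hg.fderiv_right (by norm_num : (1 : WithTop ℕ∞) + 1 ≤ 2)).differentiable one_ne_zero
      x).hasFDerivAt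
  have hderiv : ∀ y ∈ Set.univ, HasFDerivWithinAt
      (fun y ↦ g y - A (y - x) - (1 / 2 : ℝ) • B (y - x) (y - x))
      (fderiv ℝ g y - A - B (y - x)) Set.univ y := by
    intro y _
    have hq := B.hasFDerivAt_of_bilinear ((hasFDerivAt_id y).sub_const x)
      ((hasFDerivAt_id y).sub_const x)
    refine ((((hg.differentiable two_ne_zero) y).hasFDerivAt.sub
      (A.hasFDerivAt.comp y ((hasFDerivAt_id y).sub_const x))).sub
      (hq.const_smul (1 / 2 : ℝ))).hasFDerivWithinAt.congr_fderiv ?_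
    ext v
    simp only [ContinuousLinearMap.comp_id, ContinuousLinearMap.precompR_apply,
      ContinuousLinearMap.compL_apply, ContinuousLinearMap.precompL_apply,
      ContinuousLinearMap.id_apply, id_eq, sub_apply, add_apply, smul_apply]
    rw [hsymm v (y - x)]
    module
  have hlo : (fun y ↦ fderiv ℝ g y - A - B (y - x)) =o[𝓝[Set.univ] x] fun y ↦ ‖y - x‖ ^ 1 := by
    simpa using hB.isLittleO
  have := convex_univ.isLittleO_pow_succ (Set.mem_univ x) hderiv hlo
  rw [nhdsWithin_univ] at this
  refine this.congr_left fun y ↦ ?_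
  simp only [sub_self, map_zero, smul_zero, sub_zero]
  abel

theorem ContDiff.tendsto_secondOrder_quotient {g : E → G} (hg : ContDiff ℝ 2 g) (x d w : E) :
    Tendsto (fun τ : ℝ ↦ (2 / τ ^ 2) • (g (x + τ • d + (τ ^ 2 / 2) • w) - g x - τ • fderiv ℝ g x d))
      (𝓝[≠] 0) (𝓝 (fderiv ℝ g x w + fderiv ℝ (fderiv ℝ g) x d d)) := by
  set A := fderiv ℝ g x
  set B := fderiv ℝ (fderiv ℝ g) x
  set e : ℝ → E := fun τ ↦ d + (τ / 2) • w
  have hcurve : ∀ τ : ℝ, x + τ • d + (τ ^ 2 / 2) • w - x = τ • e τ := fun τ ↦ by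
    simp only [e]; module
  have he : Tendsto e (𝓝 0) (𝓝 d) := by
    have : Continuous e := by fun_prop
    simpa [e] using this.tendsto 0
  have hcurve_lim : Tendsto (fun τ : ℝ ↦ x + τ • d + (τ ^ 2 / 2) • w) (𝓝 0) (𝓝 x) := by
    have : Continuous fun τ : ℝ ↦ x + τ • d + (τ ^ 2 / 2) • w := by fun_prop
    simpa using this.tendsto 0
  have hsq : (fun τ : ℝ ↦ ‖x + τ • d + (τ ^ 2 / 2) • w - x‖ ^ 2) =O[𝓝 0] fun τ ↦ τ ^ 2 := by
    simp only [hcurve, norm_smul, mul_pow, Real.norm_eq_abs, sq_abs]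
    simpa using (isBigO_refl (fun τ : ℝ ↦ τ ^ 2) _).mul ((he.norm.pow 2).isBigO_one ℝ)
  have hrem := (((hg.isLittleO_taylor_two x).comp_tendsto hcurve_lim).trans_isBigO
    hsq).tendsto_inv_smul_nhds_zero
  have hquad : Tendsto (fun τ ↦ A w + B (e τ) (e τ)) (𝓝 0) (𝓝 (A w + B d d)) := by
    have hBc : Continuous fun v : E ↦ B v v := by fun_prop
    exact tendsto_const_nhds.add ((hBc.tendsto d).comp he)
  have hlim := ((hrem.const_smul (2 : ℝ)).add hquad).mono_left (nhdsWithin_le_nhds (s := {0}ᶜ))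
  rw [smul_zero, zero_add] at hlim
  refine hlim.congr' ?_
  filter_upwards [self_mem_nhdsWithin] with τ (hτ : τ ≠ 0)
  simp only [Function.comp_apply, hcurve, map_smul, smul_apply, e, map_add, add_apply]
  match_scalars <;> field_simp <;> ring

end Taylor

section SecondOrderTangent

open Metric

variable {E F : Type*} [NormedAddCommGroup E] [InnerProductSpace ℝ E]
  [NormedAddCommGroup F] [InnerProductSpace ℝ F]

theorem smul_mem_dirNbhd {ρ δ τ : ℝ} {d e : E} (hτ : 0 < τ) (hρ : ‖τ • e‖ < ρ)
    (he : ‖‖d‖ • e - ‖e‖ • d‖ ≤ δ * (‖e‖ * ‖d‖)) : τ • e ∈ dirNbhd ρ δ d := by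
  refine ⟨hρ, ?_⟩
  have hscale : ‖d‖ • τ • e - ‖τ • e‖ • d = τ • (‖d‖ • e - ‖e‖ • d) := by
    rw [norm_smul, Real.norm_of_nonneg hτ.le]; module
  rw [hscale, norm_smul, norm_smul, Real.norm_of_nonneg hτ.le]
  calc τ * ‖‖d‖ • e - ‖e‖ • d‖ ≤ τ * (δ * (‖e‖ * ‖d‖)) := by gcongr
    _ = δ * (τ * ‖e‖ * ‖d‖) := by ring

theorem eventually_smul_mem_dirNbhd_s8 {ι : Type*} {l : Filter ι} {ρ δ : ℝ} {d : E} {τ : ι → ℝ}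
    {e : ι → E} (hρ : 0 < ρ) (hδ : 0 < δ) (hτ : Tendsto τ l (𝓝[>] 0)) (he : Tendsto e l (𝓝 d)) :
    ∀ᶠ i in l, τ i • e i ∈ dirNbhd ρ δ d := by
  have hsmall : ∀ᶠ i in l, ‖τ i • e i‖ < ρ := by
    have : Tendsto (fun i ↦ τ i • e i) l (𝓝 ((0 : ℝ) • d)) :=
      (hτ.mono_right nhdsWithin_le_nhds).smul he
    rw [zero_smul] at this
    exact this.norm.eventually_lt_const (by simpa using hρ)
  have hdir : ∀ᶠ i in l, ‖‖d‖ • e i - ‖e i‖ • d‖ ≤ δ * (‖e i‖ * ‖d‖) := by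
    rcases eq_or_ne d 0 with rfl | hd
    · simp
    have hlhs : Tendsto (fun i ↦ ‖‖d‖ • e i - ‖e i‖ • d‖) l (𝓝 0) := by
      simpa using ((he.const_smul ‖d‖).sub (he.norm.smul_const d)).norm
    have hrhs : Tendsto (fun i ↦ δ * (‖e i‖ * ‖d‖)) l (𝓝 (δ * (‖d‖ * ‖d‖))) :=
      (he.norm.mul_const _).const_mul δ
    exact (hlhs.eventually_lt hrhs (by positivity)).mono fun _ h ↦ h.le
  filter_upwards [hτ self_mem_nhdsWithin, hsmall, hdir] with i hτi hρi hdi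
  exact smul_mem_dirNbhd hτi hρi hdi

theorem eventually_curve_mem_dirNbhd {ι : Type*} {l : Filter ι} {ρ δ : ℝ} {τ : ι → ℝ}
    (hρ : 0 < ρ) (hδ : 0 < δ) (hτ : Tendsto τ l (𝓝[>] 0)) (d w : E) :
    ∀ᶠ i in l, τ i • d + (τ i ^ 2 / 2) • w ∈ dirNbhd ρ δ d := by
  have he : Tendsto (fun i ↦ d + (τ i / 2) • w) l (𝓝 d) := by
    simpa using tendsto_const_nhds.add
      (((hτ.mono_right nhdsWithin_le_nhds).div_const 2).smul_const w)
  filter_upwards [eventually_smul_mem_dirNbhd_s8 hρ hδ hτ he] with i hi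
  convert hi using 1
  module

theorem mem_tangentCone2_of_eventually_mem {S : Set E} {x d w : E}
    (h : ∀ᶠ τ in 𝓝[>] (0 : ℝ), x + τ • d + (τ ^ 2 / 2) • w ∈ S) : w ∈ tangentCone2 S x d := by
  obtain ⟨t, ht, hmem⟩ := exists_seq_forall_of_frequently (h.and self_mem_nhdsWithin).frequently
  exact ⟨t, fun _ ↦ w, fun k ↦ (hmem k).2, ht.mono_right nhdsWithin_le_nhds, tendsto_const_nhds,
    fun k ↦ (hmem k).1⟩

theorem exists_mem_tangentCone2_dist_le [ProperSpace E] {S : Set E} (hS : IsClosed S)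
    (hne : S.Nonempty) {x d w : E} {t b : ℕ → ℝ} {r : ℝ} (ht : ∀ k, 0 < t k)
    (ht0 : Tendsto t atTop (𝓝 0)) (hb : Tendsto b atTop (𝓝 r))
    (hdist : ∀ᶠ k in atTop, infDist (x + t k • d + (t k ^ 2 / 2) • w) S ≤ t k ^ 2 / 2 * b k) :
    ∃ w' ∈ tangentCone2 S x d, dist w w' ≤ r := by
  choose y hyS hy using fun k ↦ hS.exists_infDist_eq_dist hne (x + t k • d + (t k ^ 2 / 2) • w)
  set v : ℕ → E := fun k ↦ w + (2 / t k ^ 2) • (y k - (x + t k • d + (t k ^ 2 / 2) • w))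
  have hv : ∀ k, x + t k • d + (t k ^ 2 / 2) • v k = y k := fun k ↦ by
    have : t k ≠ 0 := (ht k).ne'
    simp only [v, smul_add, smul_smul]
    rw [div_mul_div_comm, mul_comm, div_self (by simp [this]), one_smul]
    abel
  have hvw : ∀ᶠ k in atTop, dist w (v k) ≤ b k := by
    filter_upwards [hdist] with k hk
    have htk := ht k
    rw [dist_self_add_right, norm_smul, Real.norm_of_nonneg (by positivity), ← dist_eq_norm',
      ← hy k, div_mul_eq_mul_div, div_le_iff₀ (by positivity)]
    linarith
  have hbdd : ∀ᶠ k in atTop, v k ∈ closedBall w (r + 1) := by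
    filter_upwards [hvw, hb.eventually_le_const (lt_add_one r)] with k hk hbk
    rw [mem_closedBall, dist_comm]
    exact hk.trans hbk
  obtain ⟨w', -, φ, hφ, hlim⟩ :=
    tendsto_subseq_of_frequently_bounded isBounded_closedBall hbdd.frequently
  refine ⟨w', ⟨t ∘ φ, v ∘ φ, fun k ↦ ht _, ht0.comp hφ.tendsto_atTop, hlim, fun k ↦ ?_⟩, ?_⟩
  · simpa only [Function.comp_apply, hv] using hyS (φ k)
  · exact le_of_tendsto_of_tendsto (tendsto_const_nhds.dist hlim) (hb.comp hφ.tendsto_atTop)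
      (hφ.tendsto_atTop.eventually hvw)

theorem exists_mem_tangentCone2_preimage_dist_le [ProperSpace E] {g : E → F}
    (hg : ContDiff ℝ 2 g) {Λ : Set F} (hΛ : IsClosed Λ) {x : E} (hx : g x ∈ Λ) {d : E} {κ ρ δ : ℝ}
    (hκ : 0 ≤ κ) (hρ : 0 < ρ) (hδ : 0 < δ)
    (hsub : ∀ y, y - x ∈ dirNbhd ρ δ d → infDist y {z | g z ∈ Λ} ≤ κ * infDist (g y) Λ)
    (w : E) {s : F} (hs : s ∈ tangentCone2 Λ (g x) (fderiv ℝ g x d)) :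
    ∃ w' ∈ tangentCone2 {z | g z ∈ Λ} x d,
      dist w w' ≤ κ * dist (fderiv ℝ g x w + fderiv ℝ (fderiv ℝ g) x d d) s := by
  obtain ⟨t, u, ht, ht0, hu, hmem⟩ := hs
  set q : ℕ → F := fun k ↦
    (2 / t k ^ 2) • (g (x + t k • d + (t k ^ 2 / 2) • w) - g x - t k • fderiv ℝ g x d)
  have hq : Tendsto q atTop (𝓝 (fderiv ℝ g x w + fderiv ℝ (fderiv ℝ g) x d d)) :=
    (hg.tendsto_secondOrder_quotient x d w).comp
      (tendsto_nhdsWithin_iff.2 ⟨ht0, .of_forall fun k ↦ (ht k).ne'⟩)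
  have hdir : ∀ᶠ k in atTop, x + t k • d + (t k ^ 2 / 2) • w - x ∈ dirNbhd ρ δ d := by
    simpa only [add_assoc, add_sub_cancel_left] using eventually_curve_mem_dirNbhd hρ hδ
      (tendsto_nhdsWithin_iff.2 ⟨ht0, .of_forall ht⟩) d w
  have himage : ∀ k, infDist (g (x + t k • d + (t k ^ 2 / 2) • w)) Λ ≤
      t k ^ 2 / 2 * dist (q k) (u k) := fun k ↦ by
    have htk : t k ≠ 0 := (ht k).ne'
    have hsplit : g (x + t k • d + (t k ^ 2 / 2) • w) -
        (g x + t k • fderiv ℝ g x d + (t k ^ 2 / 2) • u k) = (t k ^ 2 / 2) • (q k - u k) := by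
      simp only [q, smul_sub, smul_smul]
      match_scalars <;> field_simp
    refine (infDist_le_dist_of_mem (hmem k)).trans_eq ?_
    rw [dist_eq_norm, hsplit, norm_smul, Real.norm_of_nonneg (by positivity), dist_eq_norm]
  refine exists_mem_tangentCone2_dist_le (hΛ.preimage hg.continuous) ⟨x, hx⟩ ht ht0
    ((hq.dist hu).const_mul κ) ?_
  filter_upwards [hdir] with k hk
  calc infDist (x + t k • d + (t k ^ 2 / 2) • w) {z | g z ∈ Λ}
      ≤ κ * infDist (g (x + t k • d + (t k ^ 2 / 2) • w)) Λ := hsub _ hk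
    _ ≤ κ * (t k ^ 2 / 2 * dist (q k) (u k)) := by gcongr; exact himage k
    _ = t k ^ 2 / 2 * (κ * dist (q k) (u k)) := by ring

theorem infEDist_tangentCone2_preimage_le [ProperSpace E] {g : E → F} (hg : ContDiff ℝ 2 g)
    {Λ : Set F} (hΛ : IsClosed Λ) {x : E} (hx : g x ∈ Λ) {d : E} {κ ρ δ : ℝ} (hκ : 0 < κ)
    (hρ : 0 < ρ) (hδ : 0 < δ)
    (hsub : ∀ y, y - x ∈ dirNbhd ρ δ d → infDist y {z | g z ∈ Λ} ≤ κ * infDist (g y) Λ) (w : E) :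
    infEDist w (tangentCone2 {z | g z ∈ Λ} x d) ≤
      ENNReal.ofReal κ * infEDist (fderiv ℝ g x w + fderiv ℝ (fderiv ℝ g) x d d)
        (tangentCone2 Λ (g x) (fderiv ℝ g x d)) := by
  simp only [infEDist, ENNReal.mul_iInf_of_ne (ENNReal.ofReal_pos.2 hκ).ne' ENNReal.ofReal_ne_top]
  refine le_iInf₂ fun s hs ↦ ?_
  obtain ⟨w', hw', hdist⟩ :=
    exists_mem_tangentCone2_preimage_dist_le hg hΛ hx hκ.le hρ hδ hsub w hs
  calc infEDist w (tangentCone2 {z | g z ∈ Λ} x d) ≤ edist w w' := infEDist_le_edist_of_mem hw'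
    _ ≤ ENNReal.ofReal (κ * dist (fderiv ℝ g x w + fderiv ℝ (fderiv ℝ g) x d d) s) := by
      rw [edist_dist]; exact ENNReal.ofReal_le_ofReal hdist
    _ = _ := by rw [ENNReal.ofReal_mul hκ.le, edist_dist]

theorem exists_dirNbhd_preimage_of_dirMetrSubregMod_zero [ProperSpace E] {g : E → F}
    (hg : ContDiff ℝ 1 g) {Λ : Set F} (hΛ : IsClosed Λ) {x d : E} (hx : g x ∈ Λ)
    (hM : dirMetrSubregMod g Λ x d 0) :
    ∃ ρ > (0 : ℝ), ∃ δ > (0 : ℝ), ∀ y, y - x ∈ dirNbhd ρ δ d → g y ∈ Λ := by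
  obtain ⟨K, U, hU, hlip⟩ := hg.contDiffAt.exists_lipschitzOnWith (x := x)
  obtain ⟨r, hr, hball⟩ := Metric.mem_nhds_iff.mp hU
  obtain ⟨ρ, hρ, δ, hδ, hsub⟩ := hM (1 / (2 * (K + 1))) (by positivity)
  refine ⟨min ρ (r / 2), by positivity, δ, hδ, fun y hy ↦ ?_⟩
  have hyx : dist y x < r / 2 := by
    rw [dist_eq_norm]; exact hy.1.trans_le (min_le_right _ _)
  obtain ⟨p, hpΛ, hp⟩ := (hΛ.preimage hg.continuous).exists_infDist_eq_dist ⟨x, hx⟩ y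
  have hpy : dist y p ≤ dist y x := hp ▸ infDist_le_dist_of_mem hx
  have hpx : dist p x < r := by linarith [dist_triangle_left p x y]
  have hlipΛ : infDist (g y) Λ ≤ K * dist y p :=
    (infDist_le_dist_of_mem (s := Λ) hpΛ).trans
      (hlip.dist_le_mul y (hball (by linarith : dist y x < r)) p (hball hpx))
  -- the modulus `1 / (2 * (K + 1))` times the Lipschitz constant `K` is at most `1 / 2`
  have hhalf : dist y p ≤ dist y p / 2 :=
    calc dist y p ≤ 1 / (2 * (K + 1)) * infDist (g y) Λ :=
          hp ▸ hsub y ⟨hy.1.trans_le (min_le_left _ _), hy.2⟩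
      _ ≤ 1 / (2 * (K + 1)) * (K * dist y p) := by gcongr
      _ ≤ dist y p / 2 := by
          rw [div_mul_eq_mul_div, one_mul, div_le_div_iff₀ (by positivity) two_pos]
          nlinarith [dist_nonneg (x := y) (y := p)]
  have : y = p := dist_le_zero.mp (by linarith)
  exact this ▸ hpΛ

end SecondOrderTangent

theorem stmt_8 {n m : ℕ} (g : EuclideanSpace ℝ (Fin n) → EuclideanSpace ℝ (Fin m))
    (hg : ContDiff ℝ 2 g) (Λ : Set (EuclideanSpace ℝ (Fin m))) (hΛ : IsClosed Λ)
    (xb : EuclideanSpace ℝ (Fin n)) (hx : g xb ∈ Λ)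
    (d : EuclideanSpace ℝ (Fin n)) (κ : ℝ) (hκ : 0 ≤ κ)
    (hM : dirMetrSubregMod g Λ xb d κ) :
    ∀ w : EuclideanSpace ℝ (Fin n),
      EMetric.infEdist w (tangentCone2 {x | g x ∈ Λ} xb d) ≤
        ENNReal.ofReal κ *
          EMetric.infEdist (fderiv ℝ g xb w + iteratedFDeriv ℝ 2 g xb ![d, d])
            (tangentCone2 Λ (g xb) (fderiv ℝ g xb d)) := by
  intro w
  rw [iteratedFDeriv_two_apply]
  simp only [Matrix.cons_val_zero, Matrix.cons_val_one]
  rcases hκ.eq_or_lt with rfl | hκ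
  · obtain ⟨ρ, hρ, δ, hδ, hV⟩ :=
      exists_dirNbhd_preimage_of_dirMetrSubregMod_zero (hg.of_le one_le_two) hΛ hx hM
    have hw : w ∈ tangentCone2 {x | g x ∈ Λ} xb d := by
      refine mem_tangentCone2_of_eventually_mem ?_
      filter_upwards [eventually_curve_mem_dirNbhd hρ hδ (tendsto_id (x := 𝓝[>] (0 : ℝ))) d w]
        with τ hτ
      exact hV _ (by simpa only [id, add_assoc, add_sub_cancel_left] using hτ)
    exact (Metric.infEDist_zero_of_mem hw).trans_le bot_le
  · have hbound : ∀ κ' > κ, Metric.infEDist w (tangentCone2 {x | g x ∈ Λ} xb d) ≤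
        ENNReal.ofReal κ' * Metric.infEDist (fderiv ℝ g xb w + fderiv ℝ (fderiv ℝ g) xb d d)
          (tangentCone2 Λ (g xb) (fderiv ℝ g xb d)) := fun κ' hκ' ↦ by
      obtain ⟨ρ, hρ, δ, hδ, hsub⟩ := hM κ' hκ'
      exact infEDist_tangentCone2_preimage_le hg hΛ hx (hκ.trans hκ') hρ hδ hsub w
    refine ge_of_tendsto (x := 𝓝[>] κ) ?_ (eventually_nhdsWithin_of_forall hbound)
    exact ENNReal.Tendsto.mul_const
      ((ENNReal.continuous_ofReal.tendsto κ).mono_left nhdsWithin_le_nhds)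
      (.inl (ENNReal.ofReal_pos.2 hκ).ne')
end

section
/- Let g be twice continuously differentiable, Λ closed, g(x̄) ∈ Λ, ∇g(x̄)d ∈ T_Λ(g(x̄)), and suppose M(x) = g(x) − Λ is metrically subregular at (x̄, 0) in direction d. Then the second-order tangent set T_F²(x̄; d) to the feasible set F = {x : g(x) ∈ Λ} is nonempty if and only if T_Λ²(g(x̄); ∇g(x̄)d) is nonempty. -/
open Filter Topology Pointwise RealInnerProductSpace

/-! Both second-order tangent sets are nonempty exactly when the ray `t ↦ x + t • d` stays
within distance `O(t²)` of the set along some sequence `t ↓ 0` (compactness turns the rescaled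
errors into a limit point). Taylor's formula transports such quadratic approximations from
`F = g⁻¹(Λ)` to `Λ` along `g`; conversely, directional metric subregularity turns a quadratic
bound on `dist (g (x̄ + t • d)) Λ` into one on `dist (x̄ + t • d) F`. -/

open Metric

def SecondOrderApprox {X : Type*} [NormedAddCommGroup X] [NormedSpace ℝ X]
    (S : Set X) (x d : X) : Prop :=
  ∃ C : ℝ, ∃ᶠ t in 𝓝[>] (0 : ℝ), ∃ y ∈ S, dist (x + t • d) y ≤ C * t ^ 2

theorem SecondOrderApprox.mono {X : Type*} [NormedAddCommGroup X] [NormedSpace ℝ X]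
    {S T : Set X} {x d : X} (h : SecondOrderApprox S x d) (hST : S ⊆ T) :
    SecondOrderApprox T x d :=
  let ⟨C, hC⟩ := h
  ⟨C, hC.mono fun _ ⟨y, hy, hdist⟩ => ⟨y, hST hy, hdist⟩⟩

theorem eventually_mul_lt_nhdsGT_zero (a : ℝ) {r : ℝ} (hr : 0 < r) :
    ∀ᶠ t in 𝓝[>] (0 : ℝ), t * a < r :=
  nhdsWithin_le_nhds <|
    ((continuous_mul_const a).tendsto' 0 0 (zero_mul a)).eventually (eventually_lt_nhds hr)

section Taylor

variable {E F : Type*} [NormedAddCommGroup E] [NormedSpace ℝ E]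
  [NormedAddCommGroup F] [NormedSpace ℝ F] {g : E → F}

theorem ContDiff.exists_norm_sub_sub_fderiv_le_sq (hg : ContDiff ℝ 2 g) (x : E) :
    ∃ K : ℝ, 0 ≤ K ∧ ∃ r > (0 : ℝ), ∀ y : E, ‖y - x‖ ≤ r →
      ‖g y - g x - fderiv ℝ g x (y - x)‖ ≤ K * ‖y - x‖ ^ 2 := by
  obtain ⟨K, U, hU, hlip⟩ :=
    (hg.fderiv_right (m := 1) (by norm_num)).contDiffAt.exists_lipschitzOnWith (x := x)
  obtain ⟨r, hr, hball⟩ := nhds_basis_closedBall.mem_iff.mp hU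
  refine ⟨K, K.coe_nonneg, r, hr, fun y hy => ?_⟩
  set s := closedBall x ‖y - x‖
  have hxs : x ∈ s := mem_closedBall_self (norm_nonneg _)
  have hys : y ∈ s := by simp [s, dist_eq_norm]
  have hderiv : ∀ z ∈ s, HasFDerivWithinAt g (fderiv ℝ g z) s z := fun z _ =>
    ((hg.differentiable (by norm_num)) z).hasFDerivAt.hasFDerivWithinAt
  have hlip_s : ∀ z ∈ s, ‖fderiv ℝ g z - fderiv ℝ g x‖ ≤ K * ‖y - x‖ := fun z hz => by
    have hsU : s ⊆ U := (closedBall_subset_closedBall hy).trans hball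
    rw [← dist_eq_norm]
    exact (hlip.dist_le_mul z (hsU hz) x (hsU hxs)).trans
      (mul_le_mul_of_nonneg_left hz K.coe_nonneg)
  calc ‖g y - g x - fderiv ℝ g x (y - x)‖ ≤ K * ‖y - x‖ * ‖y - x‖ :=
        (convex_closedBall x _).norm_image_sub_le_of_norm_hasFDerivWithin_le' hderiv hlip_s
          hxs hys
    _ = K * ‖y - x‖ ^ 2 := by ring

theorem exists_eventually_dist_add_smul_fderiv_le_sq (hg : ContDiff ℝ 2 g) (x d : E) (C : ℝ) :
    ∃ C' : ℝ, ∀ᶠ t in 𝓝[>] (0 : ℝ), ∀ y : E, dist (x + t • d) y ≤ C * t ^ 2 →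
      dist (g x + t • fderiv ℝ g x d) (g y) ≤ C' * t ^ 2 := by
  obtain ⟨K, hK, r, hr, htaylor⟩ := hg.exists_norm_sub_sub_fderiv_le_sq x
  set Dg := fderiv ℝ g x
  refine ⟨K * (‖d‖ + |C|) ^ 2 + ‖Dg‖ * |C|, ?_⟩
  filter_upwards [eventually_mem_nhdsWithin, eventually_mul_lt_nhdsGT_zero 1 one_pos,
    eventually_mul_lt_nhdsGT_zero (‖d‖ + |C|) hr] with t (ht : 0 < t) ht1 htr y hy
  rw [mul_one] at ht1
  have hyt : ‖y - (x + t • d)‖ ≤ |C| * t ^ 2 := by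
    rw [← dist_eq_norm, dist_comm]
    exact hy.trans (mul_le_mul_of_nonneg_right (le_abs_self C) (by positivity))
  have hyx : ‖y - x‖ ≤ t * (‖d‖ + |C|) := by
    calc ‖y - x‖ = ‖(y - (x + t • d)) + t • d‖ := by congr 1; abel
      _ ≤ |C| * t ^ 2 + t * ‖d‖ := by
        grw [norm_add_le, hyt, norm_smul, Real.norm_of_nonneg ht.le]
      _ ≤ t * (‖d‖ + |C|) := by
        nlinarith [mul_le_mul_of_nonneg_left (show t ^ 2 ≤ t by nlinarith) (abs_nonneg C)]
  have hsplit : g y - (g x + t • Dg d) = (g y - g x - Dg (y - x)) + Dg (y - (x + t • d)) := by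
    simp only [map_sub, map_add, map_smul]; abel
  rw [dist_comm, dist_eq_norm, hsplit]
  calc _ ≤ K * ‖y - x‖ ^ 2 + ‖Dg‖ * ‖y - (x + t • d)‖ := by
        grw [norm_add_le, htaylor y (hyx.trans htr.le), Dg.le_opNorm]
    _ ≤ K * (t * (‖d‖ + |C|)) ^ 2 + ‖Dg‖ * (|C| * t ^ 2) := by grw [hyx, hyt]
    _ = _ := by ring

theorem SecondOrderApprox.image (hg : ContDiff ℝ 2 g) {S : Set E} {x d : E}
    (h : SecondOrderApprox S x d) : SecondOrderApprox (g '' S) (g x) (fderiv ℝ g x d) := by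
  obtain ⟨C, hC⟩ := h
  obtain ⟨C', hC'⟩ := exists_eventually_dist_add_smul_fderiv_le_sq hg x d C
  exact ⟨C', (hC'.and_frequently hC).mono fun _ ⟨hgt, y, hy, hdist⟩ =>
    ⟨g y, Set.mem_image_of_mem g hy, hgt y hdist⟩⟩

end Taylor

section InnerProduct

variable {E F : Type*} [NormedAddCommGroup E] [InnerProductSpace ℝ E]

theorem smul_mem_dirNbhd_s9 {ρ δ t : ℝ} {d : E} (ht : 0 ≤ t) (htρ : t * ‖d‖ < ρ) (hδ : 0 ≤ δ) :
    t • d ∈ dirNbhd ρ δ d := by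
  have hnorm : ‖t • d‖ = t * ‖d‖ := by rw [norm_smul, Real.norm_of_nonneg ht]
  refine ⟨hnorm ▸ htρ, ?_⟩
  rw [hnorm, smul_smul, mul_comm ‖d‖ t, sub_self, norm_zero]
  positivity

theorem tangentCone2_nonempty_iff [ProperSpace E] {S : Set E} {x d : E} :
    (tangentCone2 S x d).Nonempty ↔ SecondOrderApprox S x d := by
  constructor
  · rintro ⟨w, t, v, ht, ht0, hv, hmem⟩
    obtain ⟨R, hR⟩ := hv.norm.bddAbove_range
    have ht_pos : Tendsto t atTop (𝓝[>] 0) :=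
      tendsto_nhdsWithin_iff.mpr ⟨ht0, Eventually.of_forall ht⟩
    refine ⟨R / 2, ht_pos.frequently (Frequently.of_forall fun k => ⟨_, hmem k, ?_⟩)⟩
    rw [dist_eq_norm, sub_add_cancel_left, norm_neg, norm_smul,
      Real.norm_of_nonneg (by positivity)]
    nlinarith [hR ⟨k, rfl⟩, sq_nonneg (t k)]
  · rintro ⟨C, hC⟩
    obtain ⟨t, htend, hP⟩ :=
      frequently_iff_seq_forall.mp (hC.and_eventually eventually_mem_nhdsWithin)
    choose hy ht using hP
    choose y hyS hyd using hy
    have ht' : ∀ k, 0 < t k := ht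
    -- rescale the errors `y k - (x + t k • d)` to second-order directions
    set v := fun k => (2 / t k ^ 2) • (y k - (x + t k • d))
    have hv : ∀ k, v k ∈ closedBall 0 (2 * C) := fun k => by
      have := ht' k
      rw [mem_closedBall_zero_iff, norm_smul, Real.norm_of_nonneg (by positivity),
        ← dist_eq_norm, dist_comm, div_mul_eq_mul_div, div_le_iff₀ (by positivity)]
      linarith [hyd k]
    obtain ⟨w, -, φ, hφ, hvw⟩ := tendsto_subseq_of_bounded isBounded_closedBall hv
    refine ⟨w, t ∘ φ, v ∘ φ, fun k => ht' _,
      (tendsto_nhdsWithin_iff.mp htend).1.comp hφ.tendsto_atTop, hvw, fun k => ?_⟩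
    have := ht' (φ k)
    simp only [Function.comp, v, smul_smul]
    rw [div_mul_div_cancel₀ two_ne_zero, div_self (by positivity), one_smul, add_sub_cancel]
    exact hyS _

theorem SecondOrderApprox.preimage [NormedAddCommGroup F] [NormedSpace ℝ F] {g : E → F}
    (hg : ContDiff ℝ 2 g) {Λ : Set F} {x d : E} (hx : g x ∈ Λ) (hM : dirMetrSubreg g Λ x d)
    (h : SecondOrderApprox Λ (g x) (fderiv ℝ g x d)) : SecondOrderApprox {z | g z ∈ Λ} x d := by
  obtain ⟨C, hC⟩ := h
  obtain ⟨C', hC'⟩ := exists_eventually_dist_add_smul_fderiv_le_sq hg x d 0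
  obtain ⟨κ, hκ, ρ, hρ, δ, hδ, hsubreg⟩ := hM
  have hev : ∀ᶠ t in 𝓝[>] (0 : ℝ), 0 < t ∧ t • d ∈ dirNbhd ρ δ d ∧
      dist (g x + t • fderiv ℝ g x d) (g (x + t • d)) ≤ C' * t ^ 2 := by
    filter_upwards [eventually_mem_nhdsWithin, eventually_mul_lt_nhdsGT_zero ‖d‖ hρ, hC']
      with t (ht : 0 < t) htρ hlin
    exact ⟨ht, smul_mem_dirNbhd_s9 ht.le htρ hδ.le, hlin _ (by simp)⟩
  refine ⟨κ * (C' + C) + 1, (hev.and_frequently hC).mono ?_⟩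
  rintro t ⟨⟨ht, hdir, hlin⟩, y, hy, hdist⟩
  have hΛ : infDist (g (x + t • d)) Λ ≤ (C' + C) * t ^ 2 := calc
    _ ≤ dist (g (x + t • d)) y := infDist_le_dist_of_mem hy
    _ ≤ dist (g (x + t • d)) (g x + t • fderiv ℝ g x d) + dist (g x + t • fderiv ℝ g x d) y :=
      dist_triangle _ _ _
    _ ≤ _ := by rw [dist_comm]; linarith
  have hF : infDist (x + t • d) {z | g z ∈ Λ} < (κ * (C' + C) + 1) * t ^ 2 := calc
    _ ≤ κ * infDist (g (x + t • d)) Λ := hsubreg _ (by rwa [add_sub_cancel_left])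
    _ ≤ κ * ((C' + C) * t ^ 2) := by gcongr
    _ < _ := by nlinarith [pow_pos ht 2]
  obtain ⟨z, hz, hdz⟩ := (infDist_lt_iff ⟨x, hx⟩).mp hF
  exact ⟨z, hz, hdz.le⟩

end InnerProduct

theorem stmt_9_general {n m : ℕ} (g : EuclideanSpace ℝ (Fin n) → EuclideanSpace ℝ (Fin m))
    (hg : ContDiff ℝ 2 g) (Λ : Set (EuclideanSpace ℝ (Fin m)))
    (xb : EuclideanSpace ℝ (Fin n)) (hx : g xb ∈ Λ)
    (d : EuclideanSpace ℝ (Fin n))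
    (hM : dirMetrSubreg g Λ xb d) :
    (tangentCone2 {x | g x ∈ Λ} xb d).Nonempty ↔
      (tangentCone2 Λ (g xb) (fderiv ℝ g xb d)).Nonempty := by
  rw [tangentCone2_nonempty_iff, tangentCone2_nonempty_iff]
  exact ⟨fun h => (h.image hg).mono (Set.image_preimage_subset g Λ),
    SecondOrderApprox.preimage hg hx hM⟩

theorem stmt_9 {n m : ℕ} (g : EuclideanSpace ℝ (Fin n) → EuclideanSpace ℝ (Fin m))
    (hg : ContDiff ℝ 2 g) (Λ : Set (EuclideanSpace ℝ (Fin m))) (hΛ : IsClosed Λ)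
    (xb : EuclideanSpace ℝ (Fin n)) (hx : g xb ∈ Λ)
    (d : EuclideanSpace ℝ (Fin n)) (hd : fderiv ℝ g xb d ∈ tangentCone' Λ (g xb))
    (hM : dirMetrSubreg g Λ xb d) :
    (tangentCone2 {x | g x ∈ Λ} xb d).Nonempty ↔
      (tangentCone2 Λ (g xb) (fderiv ℝ g xb d)).Nonempty :=
  stmt_9_general g hg Λ xb hx d hM
end

section
/- For every nonempty closed convex set S ⊆ R^n and every λ ∈ R^n, the lower generalized support function equals the support function: σ̂_S(λ) = σ_S(λ). -/
open Filter Topology Pointwise RealInnerProductSpace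

/-! For convex `S` every Fréchet normal, hence every limiting normal, is a normal in the sense
of convex analysis, so `⟪l', u⟫ ≤ ⟪l', x⟫` whenever `u ∈ S` and `l'` is normal at `x`: the
infimum inside `sigmaHat` dominates `⟪l', u⟫`, and passing to the liminf gives `σ_S ≤ σ̂_S`.
Conversely, project `u₀ + t • l` onto `S` to get `p_t`; the residual divided by `t` is a normal
`l_t = l + t⁻¹ • (u₀ - p_t)` at `p_t`. Testing the projection inequality against `u₀` gives
`‖u₀ - p_t‖² ≤ t (σ_S(l) - ⟪l, u₀⟫)`, so `l_t → l` as `t → ∞`, while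
`⟪l_t, p_t⟫ ≤ σ_S(l) - ⟪l, u₀⟫ + ⟪l_t, u₀⟫ → σ_S(l)`. -/

section SupportFunction
variable {E : Type*} [NormedAddCommGroup E] [InnerProductSpace ℝ E]

def normalCone (S : Set E) (x : E) : Set E := {v | ∀ y ∈ S, ⟪v, y - x⟫ ≤ 0}

theorem smul_mem_normalCone {S : Set E} {x v : E} (hv : v ∈ normalCone S x) {c : ℝ}
    (hc : 0 ≤ c) : c • v ∈ normalCone S x := fun y hy => by
  rw [real_inner_smul_left]
  exact mul_nonpos_of_nonneg_of_nonpos hc (hv y hy)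

theorem normalCone_subset_frechetNormal (S : Set E) (x : E) :
    normalCone S x ⊆ frechetNormal S x :=
  fun _ hv _ _ => ⟨1, one_pos, fun y hy _ => (hv y hy).trans (by positivity)⟩

theorem normalCone_subset_limNormal {S : Set E} {x : E} (hx : x ∈ S) :
    normalCone S x ⊆ limNormal S x :=
  fun v hv => ⟨fun _ => x, fun _ => v, fun _ => hx, tendsto_const_nhds, tendsto_const_nhds,
    fun _ => normalCone_subset_frechetNormal S x hv⟩

theorem Convex.frechetNormal_subset_normalCone {S : Set E} (hS : Convex ℝ S) {x : E}
    (hx : x ∈ S) : frechetNormal S x ⊆ normalCone S x := by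
  intro v hv y hy
  have hsmall : ∀ ε > (0 : ℝ), ⟪v, y - x⟫ ≤ ε * ‖y - x‖ := by
    intro ε hε
    obtain ⟨δ, hδ, hvδ⟩ := hv ε hε
    set t := min 1 (δ / (‖y - x‖ + 1))
    have ht : 0 < t := lt_min one_pos (by positivity)
    have hnear : ‖t • (y - x)‖ ≤ δ := by
      rw [norm_smul, Real.norm_of_nonneg ht.le]
      calc t * ‖y - x‖ ≤ δ / (‖y - x‖ + 1) * (‖y - x‖ + 1) :=
            mul_le_mul (min_le_right _ _) (by linarith) (norm_nonneg _) (by positivity)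
        _ = δ := div_mul_cancel₀ _ (by positivity)
    have hseg := hvδ _ (hS.add_smul_sub_mem hx hy ⟨ht.le, min_le_left _ _⟩)
      (by rwa [add_sub_cancel_left])
    rw [add_sub_cancel_left, real_inner_smul_right, norm_smul, Real.norm_of_nonneg ht.le,
      mul_left_comm] at hseg
    exact le_of_mul_le_mul_left hseg ht
  have hlim : Tendsto (fun ε : ℝ => ε * ‖y - x‖) (𝓝[>] 0) (𝓝 0) := by
    simpa using ((tendsto_id (x := 𝓝 (0 : ℝ))).mul_const ‖y - x‖).mono_left nhdsWithin_le_nhds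
  exact ge_of_tendsto hlim (eventually_nhdsWithin_of_forall hsmall)

theorem Convex.limNormal_subset_normalCone {S : Set E} (hS : Convex ℝ S) (x : E) :
    limNormal S x ⊆ normalCone S x := by
  rintro v ⟨xk, vk, hxS, hxk, hvk, hfk⟩ y hy
  exact le_of_tendsto' (hvk.inner (tendsto_const_nhds.sub hxk))
    fun k => hS.frechetNormal_subset_normalCone (hxS k) (hfk k) y hy

theorem inner_le_of_mem_normalCone {S : Set E} {x v y : E} (hv : v ∈ normalCone S x)
    (hy : y ∈ S) : ⟪v, y⟫ ≤ ⟪v, x⟫ := by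
  have := hv y hy
  rw [inner_sub_right] at this
  linarith

theorem exists_sub_mem_normalCone [CompleteSpace E] {S : Set E} (hS : IsClosed S)
    (hconv : Convex ℝ S) (hne : S.Nonempty) (z : E) : ∃ p ∈ S, z - p ∈ normalCone S p := by
  obtain ⟨p, hp, hmin⟩ := exists_norm_eq_iInf_of_complete_convex hne hS.isComplete hconv z
  exact ⟨p, hp, (norm_eq_iInf_iff_real_inner_le_zero hconv hp).1 hmin⟩

noncomputable def normalPairingInf (S : Set E) (l : E) : EReal :=
  sInf ((fun u => ((⟪l, u⟫ : ℝ) : EReal)) '' {u | l ∈ limNormal S u})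

theorem sigmaHat_eq_liminf_normalPairingInf (S : Set E) (l : E) :
    sigmaHat S l = liminf (normalPairingInf S) (𝓝 l) :=
  rfl

theorem normalPairingInf_le {S : Set E} {x v : E} (hv : v ∈ limNormal S x) :
    normalPairingInf S v ≤ (⟪v, x⟫ : ℝ) :=
  sInf_le ⟨x, hv, rfl⟩

theorem Convex.inner_le_normalPairingInf {S : Set E} (hS : Convex ℝ S) {u : E} (hu : u ∈ S)
    (l : E) : ((⟪l, u⟫ : ℝ) : EReal) ≤ normalPairingInf S l :=
  le_sInf <| Set.forall_mem_image.2 fun x hx =>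
    EReal.coe_le_coe (inner_le_of_mem_normalCone (hS.limNormal_subset_normalCone x hx) hu)

theorem Convex.suppFn_le_sigmaHat {S : Set E} (hS : Convex ℝ S) (l : E) :
    suppFn S l ≤ sigmaHat S l := by
  refine sSup_le <| Set.forall_mem_image.2 fun u hu => ?_
  have hcont : Tendsto (fun l' : E => ((⟪l', u⟫ : ℝ) : EReal)) (𝓝 l) (𝓝 (⟪l, u⟫ : ℝ)) :=
    (continuous_coe_real_ereal.tendsto _).comp (tendsto_id.inner tendsto_const_nhds)
  rw [sigmaHat_eq_liminf_normalPairingInf, ← hcont.liminf_eq]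
  exact liminf_le_liminf (Eventually.of_forall fun l' => hS.inner_le_normalPairingInf hu l')

theorem exists_mem_normalCone_near [CompleteSpace E] {S : Set E} (hS : IsClosed S)
    (hconv : Convex ℝ S) {u₀ l : E} (hu₀ : u₀ ∈ S) {M : ℝ} (hM : ∀ u ∈ S, ⟪l, u⟫ ≤ M)
    {t : ℝ} (ht : 0 < t) :
    ∃ p ∈ S, ∃ v ∈ normalCone S p,
      ‖v - l‖ ^ 2 ≤ (M - ⟪l, u₀⟫) * (1 / t) ∧ ⟪v, p⟫ ≤ M - ⟪l, u₀⟫ + ⟪v, u₀⟫ := by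
  obtain ⟨p, hp, hnormal⟩ := exists_sub_mem_normalCone hS hconv ⟨u₀, hu₀⟩ (u₀ + t • l)
  obtain ⟨w, rfl⟩ : ∃ w, p = u₀ - w := ⟨u₀ - p, (sub_sub_cancel _ _).symm⟩
  have hres : u₀ + t • l - (u₀ - w) = t • l + w := by abel
  rw [hres] at hnormal
  have hw : t * ⟪l, w⟫ + ‖w‖ ^ 2 ≤ 0 := by
    simpa [inner_add_left, real_inner_smul_left, real_inner_self_eq_norm_sq] using
      hnormal u₀ hu₀
  have hlw : -⟪l, w⟫ ≤ M - ⟪l, u₀⟫ := by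
    have := hM _ hp
    rw [inner_sub_right] at this
    linarith
  have hv : l + t⁻¹ • w = t⁻¹ • (t • l + w) := by
    rw [smul_add, inv_smul_smul₀ ht.ne']
  refine ⟨u₀ - w, hp, l + t⁻¹ • w, hv ▸ smul_mem_normalCone hnormal (inv_nonneg.2 ht.le), ?_, ?_⟩
  · rw [add_sub_cancel_left, norm_smul, mul_pow, Real.norm_of_nonneg (inv_nonneg.2 ht.le)]
    calc t⁻¹ ^ 2 * ‖w‖ ^ 2 ≤ t⁻¹ ^ 2 * (t * (M - ⟪l, u₀⟫)) := by gcongr; nlinarith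
      _ = (M - ⟪l, u₀⟫) * (1 / t) := by field_simp
  · have : 0 ≤ t⁻¹ * ‖w‖ ^ 2 := by positivity
    simp only [inner_sub_right, inner_add_left, real_inner_smul_left, real_inner_self_eq_norm_sq]
    linarith

theorem sigmaHat_le_of_forall_inner_le [CompleteSpace E] {S : Set E} (hS : IsClosed S)
    (hconv : Convex ℝ S) {u₀ l : E} (hu₀ : u₀ ∈ S) {M : ℝ} (hM : ∀ u ∈ S, ⟪l, u⟫ ≤ M) :
    sigmaHat S l ≤ M := by
  choose p hpS v hv hvl hvp using fun k : ℕ =>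
    exists_mem_normalCone_near hS hconv hu₀ hM (Nat.cast_add_one_pos k)
  have hvl_lim : Tendsto v atTop (𝓝 l) := by
    have hbound : Tendsto (fun k : ℕ => √((M - ⟪l, u₀⟫) * (1 / ((k : ℝ) + 1)))) atTop (𝓝 0) := by
      simpa using (tendsto_one_div_add_atTop_nhds_zero_nat.const_mul (M - ⟪l, u₀⟫)).sqrt
    refine tendsto_iff_norm_sub_tendsto_zero.2 <| squeeze_zero (fun _ => norm_nonneg _)
      (fun k => ?_) hbound
    simpa using Real.abs_le_sqrt (hvl k)
  have hvp_lim : Tendsto (fun k => M - ⟪l, u₀⟫ + ⟪v k, u₀⟫) atTop (𝓝 M) := by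
    simpa using (tendsto_const_nhds (x := M - ⟪l, u₀⟫)).add
      (hvl_lim.inner (𝕜 := ℝ) (tendsto_const_nhds (x := u₀)))
  calc sigmaHat S l
      ≤ liminf (normalPairingInf S ∘ v) atTop := hvl_lim.liminf_le_liminf_comp
    _ ≤ liminf (fun k => ((M - ⟪l, u₀⟫ + ⟪v k, u₀⟫ : ℝ) : EReal)) atTop :=
        liminf_le_liminf <| Eventually.of_forall fun k =>
          (normalPairingInf_le (normalCone_subset_limNormal (hpS k) (hv k))).trans
            (EReal.coe_le_coe (hvp k))
    _ = M := ((continuous_coe_real_ereal.tendsto _).comp hvp_lim).liminf_eq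

theorem sigmaHat_le_suppFn [CompleteSpace E] {S : Set E} (hS : IsClosed S) (hconv : Convex ℝ S)
    (hne : S.Nonempty) (l : E) : sigmaHat S l ≤ suppFn S l := by
  obtain ⟨u₀, hu₀⟩ := hne
  refine EReal.le_of_forall_lt_iff_le.1 fun M hM =>
    sigmaHat_le_of_forall_inner_le hS hconv hu₀ fun u hu => ?_
  exact EReal.coe_le_coe_iff.1 ((le_sSup (Set.mem_image_of_mem _ hu)).trans hM.le)

end SupportFunction

theorem stmt_12 {n : ℕ} (S : Set (EuclideanSpace ℝ (Fin n))) (hS : IsClosed S)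
    (hconv : Convex ℝ S) (hne : S.Nonempty) (l : EuclideanSpace ℝ (Fin n)) :
    sigmaHat S l = suppFn S l :=
  le_antisymm (sigmaHat_le_suppFn hS hconv hne l) (hconv.suppFn_le_sigmaHat l)
end
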